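/- Under the hypotheses of projected online gradient descent with gradient bound G and domain diameter D, choosing the step size η = D√(1 + P_T/D)/(G√T) yields dynamic regret ∑_{t=1}^T f_t(θ_t) - ∑_{t=1}^T f_t(u_t) = O(G√(D T (D + P_T))), i.e., it is at most a constant times √(T(1 + P_T)) when D and G are treated as constants. -/

import Mathlib

/-!
Each projected gradient step satisfies
`f_t(θ_t) - f_t(u_t) ≤ (‖θ_t - u_t‖² - ‖θ_{t+1} - u_t‖²)/(2η) + ηG²/2`: the first-order
inequality of convexity bounds the left side by `⟪∇f_t(θ_t), θ_t - u_t⟫`, and projecting onto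
`Θ` does not increase the distance to `u_t`. Summed over `t`, the distances telescope up to the
drift of the comparator, `‖θ_{t+1} - u_{t+1}‖² - ‖θ_{t+1} - u_t‖² ≤ 3D‖u_{t+1} - u_t‖`, so the
regret is at most `(D² + 3D P_T)/(2η) + TηG²/2`. The given `η` balances the two terms, giving
`2G√(DT(D + P_T)) ≤ 2G(D + 1)√(T(1 + P_T))`.
-/

open Finset

theorem ConvexOn.add_apply_sub_le_of_hasFDerivAt {E : Type*} [NormedAddCommGroup E]
    [NormedSpace ℝ E] {s : Set E} {f : E → ℝ} {f' : E →L[ℝ] ℝ} {x y : E}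
    (hf : ConvexOn ℝ s f) (hx : x ∈ s) (hy : y ∈ s) (hf' : HasFDerivAt f f' x) :
    f x + f' (y - x) ≤ f y := by
  set ℓ : ℝ →ᵃ[ℝ] E := AffineMap.lineMap x y
  have hline : ConvexOn ℝ (ℓ ⁻¹' s) (f ∘ ℓ) := hf.comp_affineMap ℓ
  have hderiv : HasDerivAt (f ∘ ℓ) (f' (y - x)) 0 := by
    refine HasFDerivAt.comp_hasDerivAt (0 : ℝ) ?_ AffineMap.hasDerivAt_lineMap
    simpa [ℓ] using hf'
  have hslope := hline.le_slope_of_hasDerivAt (x := 0) (y := 1) (by simpa [ℓ]) (by simpa [ℓ])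
    one_pos hderiv
  simp only [ℓ, slope_def_field, Function.comp_apply, AffineMap.lineMap_apply_one,
    AffineMap.lineMap_apply_zero, sub_zero, div_one] at hslope
  linarith

theorem ConvexOn.add_inner_sub_le_of_hasGradientAt {E : Type*} [NormedAddCommGroup E]
    [InnerProductSpace ℝ E] [CompleteSpace E] {s : Set E} {f : E → ℝ} {g x y : E}
    (hf : ConvexOn ℝ s f) (hx : x ∈ s) (hy : y ∈ s) (hg : HasGradientAt f g x) :
    f x + inner ℝ g (y - x) ≤ f y :=
  hf.add_apply_sub_le_of_hasFDerivAt hx hy hg.hasFDerivAt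

theorem Convex.norm_sub_le_of_forall_norm_sub_le {E : Type*} [NormedAddCommGroup E]
    [InnerProductSpace ℝ E] {K : Set E} (hK : Convex ℝ K) {x p u : E} (hp : p ∈ K)
    (hmin : ∀ y ∈ K, ‖x - p‖ ≤ ‖x - y‖) (hu : u ∈ K) : ‖p - u‖ ≤ ‖x - u‖ := by
  have : Nonempty K := ⟨⟨p, hp⟩⟩
  have hinf : ‖x - p‖ = ⨅ w : K, ‖x - w‖ :=
    le_antisymm (le_ciInf fun w => hmin w w.2)
      (ciInf_le ⟨0, fun _ ⟨_, h⟩ => h ▸ norm_nonneg _⟩ (⟨p, hp⟩ : K))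
  have hobtuse : inner ℝ (x - p) (u - p) ≤ 0 :=
    (norm_eq_iInf_iff_real_inner_le_zero hK hp).mp hinf u hu
  have hexpand : ‖x - u‖ ^ 2 = ‖x - p‖ ^ 2 - 2 * inner ℝ (x - p) (u - p) + ‖p - u‖ ^ 2 := by
    rw [← norm_neg (p - u), neg_sub, ← norm_sub_sq_real, sub_sub_sub_cancel_right]
  refine pow_le_pow_iff_left₀ (norm_nonneg _) (norm_nonneg _) two_ne_zero |>.mp ?_
  nlinarith [sq_nonneg ‖x - p‖]

theorem sq_norm_sub_le_sq_norm_sub_add {E : Type*} [SeminormedAddCommGroup E] {D : ℝ}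
    {x y z : E} (hxy : ‖x - y‖ ≤ D) (hzy : ‖z - y‖ ≤ D) :
    ‖x - z‖ ^ 2 ≤ ‖x - y‖ ^ 2 + 3 * D * ‖z - y‖ := by
  have htri : ‖x - z‖ ≤ ‖x - y‖ + ‖z - y‖ := by
    simpa [norm_sub_rev y z] using norm_sub_le_norm_sub_add_norm_sub x y z
  have := pow_le_pow_left₀ (norm_nonneg _) htri 2
  nlinarith [norm_nonneg (x - y), norm_nonneg (z - y)]

theorem sum_Icc_sub_eq_add_sum_Icc_sub (a b : ℕ → ℝ) (T : ℕ) :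
    ∑ t ∈ Icc 1 (T + 1), (a t - b t) = a 1 - b (T + 1) + ∑ t ∈ Icc 1 T, (a (t + 1) - b t) := by
  induction T with
  | zero => simp
  | succ T ih =>
    rw [sum_Icc_succ_top (by omega), ih, sum_Icc_succ_top (by omega)]
    ring

theorem ConvexOn.sub_le_of_projected_gradient_step {E : Type*} [NormedAddCommGroup E]
    [InnerProductSpace ℝ E] [CompleteSpace E] {K : Set E} (hK : Convex ℝ K) {f : E → ℝ}
    (hf : ConvexOn ℝ Set.univ f) {η : ℝ} (hη : 0 < η) {θ g p u : E} (hg : HasGradientAt f g θ)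
    (hp : p ∈ K) (hmin : ∀ y ∈ K, ‖θ - η • g - p‖ ≤ ‖θ - η • g - y‖) (hu : u ∈ K) :
    f θ - f u ≤ (‖θ - u‖ ^ 2 - ‖p - u‖ ^ 2) / (2 * η) + η * ‖g‖ ^ 2 / 2 := by
  have hfirst : f θ - f u ≤ inner ℝ g (θ - u) := by
    have := hf.add_inner_sub_le_of_hasGradientAt (Set.mem_univ θ) (Set.mem_univ u) hg
    rw [← neg_sub θ u, inner_neg_right] at this
    linarith
  have hproj : ‖p - u‖ ≤ ‖θ - η • g - u‖ := hK.norm_sub_le_of_forall_norm_sub_le hp hmin hu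
  have hexpand :
      ‖θ - η • g - u‖ ^ 2 = ‖θ - u‖ ^ 2 - 2 * η * inner ℝ g (θ - u) + η ^ 2 * ‖g‖ ^ 2 := by
    rw [sub_right_comm, norm_sub_sq_real, real_inner_smul_right, norm_smul,
      Real.norm_of_nonneg hη.le, real_inner_comm]
    ring
  rw [div_add' _ _ _ (by positivity), le_div_iff₀ (by positivity)]
  nlinarith [pow_le_pow_left₀ (norm_nonneg _) hproj 2]

def pathLength {E : Type*} [SeminormedAddCommGroup E] (u : ℕ → E) (T : ℕ) : ℝ :=
  ∑ s ∈ Icc 1 (T - 1), ‖u (s + 1) - u s‖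

theorem dynamic_regret_le_of_projected_gradient_descent {E : Type*} [NormedAddCommGroup E]
    [InnerProductSpace ℝ E] [CompleteSpace E] {Θ : Set E} (hΘ : Convex ℝ Θ) {D G η : ℝ}
    (hη : 0 < η) (hdiam : ∀ x ∈ Θ, ∀ y ∈ Θ, ‖x - y‖ ≤ D) {f : ℕ → E → ℝ} {f' : ℕ → E → E}
    (hf : ∀ t, ConvexOn ℝ Set.univ (f t)) (hf' : ∀ t x, HasGradientAt (f t) (f' t x) x)
    (hG : ∀ t, ∀ x ∈ Θ, ‖f' t x‖ ≤ G) {proj : E → E}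
    (hproj : ∀ x, proj x ∈ Θ ∧ ∀ y ∈ Θ, ‖x - proj x‖ ≤ ‖x - y‖) {u : ℕ → E} (hu : ∀ t, u t ∈ Θ)
    {θ : ℕ → E} (hθ₁ : θ 1 ∈ Θ) (hθ : ∀ t, θ (t + 1) = proj (θ t - η • f' t (θ t))) (T : ℕ) :
    ∑ t ∈ Icc 1 T, (f t (θ t) - f t (u t))
      ≤ (D ^ 2 + 3 * D * pathLength u T) / (2 * η) + T * (η * G ^ 2 / 2) := by
  have hθΘ : ∀ t, θ (t + 1) ∈ Θ := fun t => hθ t ▸ (hproj _).1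
  have hθΘ' : ∀ t ∈ Icc 1 T, θ t ∈ Θ := by
    rintro (_ | t) ht
    · simp at ht
    · exact hθΘ t
  have hstep : ∀ t ∈ Icc 1 T, f t (θ t) - f t (u t)
      ≤ (‖θ t - u t‖ ^ 2 - ‖θ (t + 1) - u t‖ ^ 2) / (2 * η) + η * G ^ 2 / 2 := by
    intro t ht
    have hmin := (hproj (θ t - η • f' t (θ t))).2
    rw [← hθ] at hmin
    refine ((hf t).sub_le_of_projected_gradient_step hΘ hη (hf' t _) (hθΘ t) hmin (hu t)).trans ?_
    gcongr
    exact hG t _ (hθΘ' t ht)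
  have hdrift : ∀ t, ‖θ (t + 1) - u (t + 1)‖ ^ 2 - ‖θ (t + 1) - u t‖ ^ 2
      ≤ 3 * D * ‖u (t + 1) - u t‖ := fun t => by
    linarith [sq_norm_sub_le_sq_norm_sub_add (hdiam _ (hθΘ t) _ (hu t))
      (hdiam _ (hu (t + 1)) _ (hu t))]
  rcases T with _ | T
  · simp [pathLength]
    positivity
  calc ∑ t ∈ Icc 1 (T + 1), (f t (θ t) - f t (u t))
      ≤ ∑ t ∈ Icc 1 (T + 1),
          ((‖θ t - u t‖ ^ 2 - ‖θ (t + 1) - u t‖ ^ 2) / (2 * η) + η * G ^ 2 / 2) := sum_le_sum hstep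
    _ = (‖θ 1 - u 1‖ ^ 2 - ‖θ (T + 1 + 1) - u (T + 1)‖ ^ 2
          + ∑ t ∈ Icc 1 T, (‖θ (t + 1) - u (t + 1)‖ ^ 2 - ‖θ (t + 1) - u t‖ ^ 2)) / (2 * η)
          + (T + 1 : ℕ) * (η * G ^ 2 / 2) := by
      rw [sum_add_distrib, ← sum_div, sum_Icc_sub_eq_add_sum_Icc_sub, sum_const, Nat.card_Icc,
        nsmul_eq_mul, Nat.add_sub_cancel]
    _ ≤ (D ^ 2 + 3 * D * pathLength u (T + 1)) / (2 * η) + (T + 1 : ℕ) * (η * G ^ 2 / 2) := by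
      gcongr ?_ / _ + _
      have h₁ : ‖θ 1 - u 1‖ ^ 2 ≤ D ^ 2 := pow_le_pow_left₀ (norm_nonneg _) (hdiam _ hθ₁ _ (hu 1)) 2
      have h₂ := sum_le_sum fun t (_ : t ∈ Icc 1 T) => hdrift t
      rw [← mul_sum] at h₂
      change _ ≤ D ^ 2 + 3 * D * ∑ t ∈ Icc 1 T, ‖u (t + 1) - u t‖
      nlinarith [sq_nonneg ‖θ (T + 1 + 1) - u (T + 1)‖]

theorem regret_bound_at_tuned_step_le {D G P T η : ℝ} (hD : 0 < D) (hG : 0 < G) (hP : 0 ≤ P)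
    (hT : 0 < T) (hη : η = D * √(1 + P / D) / (G * √T)) :
    (D ^ 2 + 3 * D * P) / (2 * η) + T * (η * G ^ 2 / 2) ≤ 2 * G * √(D * T * (D + P)) := by
  set R := D * √(1 + P / D)
  have hR : 0 < R := by positivity
  have hR2 : R ^ 2 = D * (D + P) := by
    rw [mul_pow, Real.sq_sqrt (by positivity)]
    field_simp
  have hsqrt : √(D * T * (D + P)) = √T * R := by
    rw [show D * T * (D + P) = T * R ^ 2 by rw [hR2]; ring, Real.sqrt_mul hT.le,
      Real.sqrt_sq hR.le]
  have hsT : 0 < √T := Real.sqrt_pos.mpr hT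
  have hT2 : √T ^ 2 = T := Real.sq_sqrt hT.le
  rw [hsqrt, hη]
  calc (D ^ 2 + 3 * D * P) / (2 * (R / (G * √T))) + T * (R / (G * √T) * G ^ 2 / 2)
      ≤ 3 * R ^ 2 / (2 * (R / (G * √T))) + T * (R / (G * √T) * G ^ 2 / 2) := by
        gcongr
        nlinarith
    _ = 2 * G * (√T * R) := by
        field_simp
        rw [hT2]
        ring

/-- With step size `η = D √(1 + P_T/D)/(G √T)`, projected OGD has dynamic regret
at most a constant (depending only on `D` and `G`) times `√(T (1 + P_T))`. -/
theorem stmt_2 {d : ℕ} (D G : ℝ) (hD : 0 < D) (hG : 0 < G) :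
    ∃ C > 0, ∀ (Θ : Set (EuclideanSpace ℝ (Fin d))),
      Θ.Nonempty → IsClosed Θ → Convex ℝ Θ →
      (∀ x ∈ Θ, ∀ y ∈ Θ, ‖x - y‖ ≤ D) →
      ∀ (T : ℕ), 1 ≤ T →
      ∀ (f : ℕ → EuclideanSpace ℝ (Fin d) → ℝ)
        (f' : ℕ → EuclideanSpace ℝ (Fin d) → EuclideanSpace ℝ (Fin d)),
      (∀ t, ConvexOn ℝ Set.univ (f t)) →
      (∀ t x, HasGradientAt (f t) (f' t x) x) →
      (∀ t, ∀ x ∈ Θ, ‖f' t x‖ ≤ G) →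
      ∀ (proj : EuclideanSpace ℝ (Fin d) → EuclideanSpace ℝ (Fin d)),
      (∀ x, proj x ∈ Θ ∧ ∀ y ∈ Θ, ‖x - proj x‖ ≤ ‖x - y‖) →
      ∀ (u : ℕ → EuclideanSpace ℝ (Fin d)), (∀ t, u t ∈ Θ) →
      ∀ (θ : ℕ → EuclideanSpace ℝ (Fin d)), θ 1 ∈ Θ →
      (∀ t, θ (t + 1) =
        proj (θ t - (D * Real.sqrt (1 + (∑ s ∈ Finset.Icc 1 (T - 1), ‖u (s + 1) - u s‖) / D)
          / (G * Real.sqrt T)) • f' t (θ t))) →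
      ∑ t ∈ Finset.Icc 1 T, f t (θ t) - ∑ t ∈ Finset.Icc 1 T, f t (u t)
        ≤ C * Real.sqrt ((T : ℝ) *
            (1 + ∑ s ∈ Finset.Icc 1 (T - 1), ‖u (s + 1) - u s‖)) := by
  refine ⟨2 * G * (D + 1), by positivity, ?_⟩
  intro Θ _ _ hΘ hdiam T hT f f' hf hf' hfG proj hproj u hu θ hθ₁ hθ
  set P := pathLength u T
  set η := D * √(1 + P / D) / (G * √T)
  have hP : 0 ≤ P := sum_nonneg fun _ _ => norm_nonneg _
  have hT' : (0 : ℝ) < T := by exact_mod_cast hT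
  have hη : 0 < η := by positivity
  have hscale : √(D * T * (D + P)) ≤ (D + 1) * √(T * (1 + P)) := by
    rw [← Real.sqrt_sq (by positivity : 0 ≤ D + 1), ← Real.sqrt_mul (by positivity)]
    refine Real.sqrt_le_sqrt ?_
    nlinarith [mul_nonneg hT'.le hP, mul_nonneg hD.le (mul_nonneg hT'.le hP),
      mul_nonneg (mul_nonneg hD.le hD.le) (mul_nonneg hT'.le hP)]
  rw [← sum_sub_distrib]
  calc _ ≤ (D ^ 2 + 3 * D * P) / (2 * η) + T * (η * G ^ 2 / 2) :=
        dynamic_regret_le_of_projected_gradient_descent hΘ hη hdiam hf hf' hfG hproj hu hθ₁ hθ T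
    _ ≤ 2 * G * √(D * T * (D + P)) := regret_bound_at_tuned_step_le hD hG hP hT' rfl
    _ ≤ 2 * G * ((D + 1) * √(T * (1 + P))) := by gcongr
    _ = 2 * G * (D + 1) * √(T * (1 + P)) := by ring
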